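/- arXiv:2509.24324 — 2 statements merged into one kernel-verified Lean document; each statement's English description precedes it below -/
import Mathlib

section
/- For all n ≥ 0, a_4(7n+4) ≡ 0 (mod 7), where a_4(n) is defined by ∑_{n≥0} a_4(n) q^n = (q^2;q^2)_∞^3/(q;q)_∞^4. -/
/-!
Modulo 7, `(q;q)_∞ ^ 7 = (q^7;q^7)_∞`, so the generating function of `a_4` is congruent to
`(q;q)_∞ ^ 3 (q^2;q^2)_∞ ^ 3 / (q^7;q^7)_∞`. By Jacobi's identity
`(q;q)_∞ ^ 3 = ∑ (-1)^t (2t+1) q^(t(t+1)/2)`, the numerator is a sum of terms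
`± (2t+1)(2s+1) q^(T_t + 2 T_s)`, and `T_t + 2 T_s ≡ 4 (mod 7)` means
`(2t+1)^2 + 2 (2s+1)^2 ≡ 0 (mod 7)`, which forces `7 ∣ (2t+1)(2s+1)` because `-2` is not a square
mod 7. Dividing by a unit power series in `q^7` keeps the coefficients in the class `4 mod 7` zero.

Jacobi's identity is proved in a ring where `q^(N+1) = 0`: the coefficient of `z^j` in the finite
triple product `∏_{i<m} (1 + q^(i+1) z)(z + q^i)` is `q^T(j-m)` times a Gaussian binomial
coefficient, which becomes `1 / (q;q)_N` once `j` is far from both ends. Differentiating at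
`z = -1`, where the factor `z + 1` vanishes, gives `(q;q)_N ^ 2` on one side and, after pairing the
exponents `T(k) = T(-k-1)`, the sum `∑ (-1)^t (2t+1) q^T(t) / (q;q)_N` on the other.
-/

/-- Truncated product `∏_{j=1}^{N} (1 - q^{k j})`, approximating `(q^k;q^k)_∞`. -/
noncomputable def etaTrunc (k N : ℕ) : PowerSeries ℤ :=
  ∏ j ∈ Finset.range N, (1 - (PowerSeries.X : PowerSeries ℤ) ^ (k * (j + 1)))

/-- `a` has generating function `(q^2;q^2)_∞^{r-1}/(q;q)_∞^r`, expressed via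
coefficientwise agreement with truncated products. -/
def IsGF (r : ℕ) (a : ℕ → ℤ) : Prop :=
  ∀ N n : ℕ, n ≤ N →
    PowerSeries.coeff n (etaTrunc 1 N ^ r * PowerSeries.mk a) =
    PowerSeries.coeff n (etaTrunc 2 N ^ (r - 1))

open Finset

section QAnalogues

variable {A B : Type*} [CommRing A] [CommRing B]

/-- The `q`-Pochhammer symbol `(q;q)_n`. -/
def qPoch (q : A) (n : ℕ) : A := ∏ i ∈ range n, (1 - q ^ (i + 1))

theorem qPoch_succ (q : A) (n : ℕ) : qPoch q (n + 1) = qPoch q n * (1 - q ^ (n + 1)) :=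
  prod_range_succ _ _

theorem map_qPoch {F : Type*} [FunLike F A B] [RingHomClass F A B] (f : F) (q : A) (n : ℕ) :
    f (qPoch q n) = qPoch (f q) n := by
  simp [qPoch, map_prod]

@[simp] theorem qPoch_zero_left (n : ℕ) : qPoch (0 : A) n = 1 := by simp [qPoch]

theorem qPoch_pow_char (p : ℕ) [Fact p.Prime] [CharP A p] (q : A) (n : ℕ) :
    qPoch q n ^ p = qPoch (q ^ p) n := by
  simp only [qPoch, ← prod_pow, sub_pow_char, one_pow, ← pow_mul, mul_comm p]

theorem qPoch_eq_of_pow_eq_zero {q : A} {N n : ℕ} (hq : q ^ (N + 1) = 0) (hn : N ≤ n) :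
    qPoch q n = qPoch q N := by
  rw [qPoch, ← prod_range_mul_prod_Ico _ hn, qPoch, prod_eq_one (s := Ico N n), mul_one]
  intro i hi
  rw [pow_eq_zero_of_le (by simp at hi; omega) hq, sub_zero]

def qBinom (q : A) : ℕ → ℕ → A
  | _, 0 => 1
  | 0, _ + 1 => 0
  | n + 1, k + 1 => qBinom q n (k + 1) + q ^ (n - k) * qBinom q n k

variable (q : A)

@[simp] theorem qBinom_zero_right (n : ℕ) : qBinom q n 0 = 1 := by cases n <;> rfl

theorem qBinom_succ_succ (n k : ℕ) :
    qBinom q (n + 1) (k + 1) = qBinom q n (k + 1) + q ^ (n - k) * qBinom q n k := rfl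

theorem qBinom_eq_zero_of_lt {n k : ℕ} (h : n < k) : qBinom q n k = 0 := by
  induction n generalizing k with
  | zero => obtain ⟨k, rfl⟩ := Nat.exists_eq_succ_of_ne_zero h.ne'; rfl
  | succ n ih =>
    obtain ⟨k, rfl⟩ := Nat.exists_eq_succ_of_ne_zero (by omega : k ≠ 0)
    rw [qBinom_succ_succ, ih (by omega), ih (by omega), mul_zero, add_zero]

theorem qPoch_mul_qBinom (n k : ℕ) :
    qPoch q k * qBinom q n k = ∏ i ∈ range k, (1 - q ^ (n - i)) := by
  induction n generalizing k with
  | zero =>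
    cases k with
    | zero => simp [qPoch]
    | succ k => rw [qBinom_eq_zero_of_lt q k.succ_pos, mul_zero, prod_range_succ', zero_tsub,
        pow_zero, sub_self, mul_zero]
  | succ n ih =>
    cases k with
    | zero => simp [qPoch]
    | succ k =>
      rw [prod_range_succ', Nat.sub_zero]
      simp only [Nat.add_sub_add_right]
      rcases le_or_gt k n with hk | hk
      · have hpow : q ^ (n - k) * q ^ (k + 1) = q ^ (n + 1) := by rw [← pow_add]; congr 1; omega
        have ih' := ih (k + 1)
        rw [qPoch_succ, prod_range_succ] at ih'
        rw [qBinom_succ_succ, qPoch_succ]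
        linear_combination ih' + (1 - q ^ (k + 1)) * q ^ (n - k) * ih k -
          (∏ i ∈ range k, (1 - q ^ (n - i))) * hpow
      · rw [qBinom_eq_zero_of_lt q (by omega), mul_zero, prod_eq_zero (i := n) (by simp; omega)
          (by simp), zero_mul]

theorem one_sub_pow_mul_qBinom_succ (n k : ℕ) :
    (1 - q ^ (k + 1)) * qBinom q n (k + 1) = (1 - q ^ (n - k)) * qBinom q n k := by
  induction n generalizing k with
  | zero => simp [qBinom_eq_zero_of_lt]
  | succ n ih =>
    cases k with
    | zero =>
      have h := ih 0
      simp only [qBinom_succ_succ, qBinom_zero_right, Nat.sub_zero, mul_one] at h ⊢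
      linear_combination h
    | succ k =>
      rcases le_or_gt (k + 1) n with hk | hk
      · have h1 : q ^ (n - (k + 1)) * q ^ (k + 2) = q ^ (n + 1) := by
          rw [← pow_add]; congr 1; omega
        have h2 : q ^ (n - k) * q ^ (k + 1) = q ^ (n + 1) := by
          rw [← pow_add]; congr 1; omega
        rw [qBinom_succ_succ, qBinom_succ_succ, Nat.add_sub_add_right]
        linear_combination ih (k + 1) + q ^ (n - k) * ih k +
          qBinom q n (k + 1) * (h2 - h1)
      · rw [qBinom_eq_zero_of_lt q (by omega : n + 1 < k + 2), mul_zero, Nat.add_sub_add_right]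
        rcases (show n ≤ k by omega).eq_or_lt with rfl | hlt
        · simp
        · rw [qBinom_eq_zero_of_lt q (by omega), mul_zero]

theorem qBinom_succ_succ' (n k : ℕ) :
    qBinom q (n + 1) (k + 1) = q ^ (k + 1) * qBinom q n (k + 1) + qBinom q n k := by
  rw [qBinom_succ_succ]
  linear_combination one_sub_pow_mul_qBinom_succ q n k

theorem qBinom_add_two_one (n : ℕ) :
    qBinom q (n + 2) 1 = q * qBinom q n 1 + (1 + q ^ (n + 1)) := by
  rw [qBinom_succ_succ', qBinom_succ_succ]
  simp only [Nat.sub_zero, qBinom_zero_right]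
  ring

theorem qBinom_add_two_add_two (n k : ℕ) :
    qBinom q (n + 2) (k + 2) = q ^ (k + 2) * qBinom q n (k + 2) +
      (1 + q ^ (n + 1)) * qBinom q n (k + 1) + q ^ (n - k) * qBinom q n k := by
  rw [qBinom_succ_succ', qBinom_succ_succ, qBinom_succ_succ]
  rcases le_or_gt (k + 1) n with hk | hk
  · have h : q ^ (k + 2) * q ^ (n - (k + 1)) = q ^ (n + 1) := by rw [← pow_add]; congr 1; omega
    linear_combination qBinom q n (k + 1) * h
  · rw [qBinom_eq_zero_of_lt q hk, qBinom_eq_zero_of_lt q (by omega : n < k + 2)]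
    ring

theorem qPoch_mul_qBinom_eq_one {q : A} {N n k : ℕ} (hq : q ^ (N + 1) = 0) (hk : N ≤ k)
    (hkn : k + N ≤ n) : qPoch q N * qBinom q n k = 1 := by
  rw [← qPoch_eq_of_pow_eq_zero hq hk, qPoch_mul_qBinom]
  refine prod_eq_one fun i hi => ?_
  rw [pow_eq_zero_of_le (by simp at hi; omega) hq, sub_zero]

end QAnalogues

/-- `T(k) = k(k+1)/2`, on `ℤ` so that the symmetry `T(-k-1) = T(k)` is available. -/
def tri (k : ℤ) : ℕ := (k * (k + 1) / 2).toNat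

theorem two_mul_tri (k : ℤ) : 2 * (tri k : ℤ) = k * (k + 1) := by
  have hk : 0 ≤ k * (k + 1) := by rcases le_or_gt 0 k with h | h <;> nlinarith
  rw [tri, Int.toNat_of_nonneg (Int.ediv_nonneg hk zero_le_two),
    Int.mul_ediv_cancel' (Int.even_mul_succ_self k).two_dvd]

theorem tri_neg_sub_one (k : ℤ) : tri (-k - 1) = tri k := by
  have h := two_mul_tri (-k - 1)
  rw [show (-k - 1) * (-k - 1 + 1) = k * (k + 1) by ring, ← two_mul_tri k] at h
  omega

theorem tri_sub_one (k : ℤ) : (tri k : ℤ) = tri (k - 1) + k := by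
  have := two_mul_tri k
  have := two_mul_tri (k - 1)
  linarith

theorem le_tri (k : ℤ) : k ≤ tri k := by
  nlinarith [two_mul_tri k]

theorem neg_sub_one_le_tri (k : ℤ) : -k - 1 ≤ tri k := by
  simpa [tri_neg_sub_one] using le_tri (-k - 1)

theorem pow_tri_mul_pow {A : Type*} [CommRing A] (q : A) {k l : ℤ} {a b : ℕ} (hk : k = a - b)
    (hl : l = k - 1) : q ^ tri k * q ^ b = q ^ tri l * q ^ a := by
  have := tri_sub_one k
  rw [← pow_add, ← pow_add]
  congr 1
  subst hl
  omega

section TripleProduct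

open Polynomial

variable {A : Type*} [CommRing A] (q : A)

noncomputable def tripleProduct (m : ℕ) : A[X] :=
  ∏ i ∈ range m, (1 + C (q ^ (i + 1)) * X) * (X + C (q ^ i))

theorem tripleProduct_succ (m : ℕ) :
    tripleProduct q (m + 1) = tripleProduct q m * C (q ^ m) +
      tripleProduct q m * X ^ 1 * C (1 + q ^ (2 * m + 1)) +
      tripleProduct q m * X ^ 2 * C (q ^ (m + 1)) := by
  rw [tripleProduct, prod_range_succ, ← tripleProduct]
  simp only [map_add, map_one, map_pow]
  ring

theorem coeff_tripleProduct (m j : ℕ) :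
    (tripleProduct q m).coeff j = q ^ tri (j - m) * qBinom q (2 * m) j := by
  induction m generalizing j with
  | zero =>
    cases j with
    | zero => simp [tripleProduct, tri]
    | succ j => simp [tripleProduct, coeff_one, qBinom_eq_zero_of_lt]
  | succ m ih =>
    rw [tripleProduct_succ]
    simp only [coeff_add, coeff_mul_C, coeff_mul_X_pow', ih, show 2 * (m + 1) = 2 * m + 2 by ring]
    match j with
    | 0 =>
      rw [if_neg (by omega), if_neg (by omega)]
      simp only [zero_mul, add_zero, qBinom_zero_right, mul_one]
      linear_combination pow_tri_mul_pow q (k := (0 : ℕ) - m) (l := (0 : ℕ) - (m + 1 : ℕ)) (a := 0)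
        rfl (by push_cast; ring)
    | 1 =>
      rw [if_pos le_rfl, if_neg (by omega), Nat.sub_self, qBinom_add_two_one, qBinom_zero_right,
        show tri ((0 : ℕ) - m) = tri ((1 : ℕ) - (m + 1 : ℕ)) by congr 1; push_cast; ring]
      linear_combination qBinom q (2 * m) 1 *
        pow_tri_mul_pow q (k := (1 : ℕ) - m) (l := (1 : ℕ) - (m + 1 : ℕ)) rfl (by push_cast; ring)
    | j + 2 =>
      rw [if_pos (by omega), if_pos (by omega), Nat.add_sub_cancel, show j + 2 - 1 = j + 1 by omega,
        qBinom_add_two_add_two,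
        show tri ((j + 1 : ℕ) - m) = tri ((j + 2 : ℕ) - (m + 1 : ℕ)) by congr 1; push_cast; ring]
      have e1 := pow_tri_mul_pow q (a := j + 2) (b := m) (l := (j + 2 : ℕ) - (m + 1 : ℕ))
        rfl (by push_cast; ring)
      rcases le_or_gt j (2 * m) with hj | hj
      · have e3 := pow_tri_mul_pow q (a := m + 1) (b := 2 * m - j) (k := (j + 2 : ℕ) - (m + 1 : ℕ))
          (l := j - m) (by push_cast [Nat.cast_sub hj]; ring) (by push_cast; ring)
        linear_combination qBinom q (2 * m) (j + 2) * e1 - qBinom q (2 * m) j * e3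
      · simp only [qBinom_eq_zero_of_lt q hj, qBinom_eq_zero_of_lt q (by omega : 2 * m < j + 1),
          qBinom_eq_zero_of_lt q (by omega : 2 * m < j + 2)]
        ring

theorem eval_derivative_tripleProduct_succ (m : ℕ) :
    (derivative (tripleProduct q (m + 1))).eval (-1) =
      (-1) ^ m * (qPoch q (m + 1) * qPoch q m) := by
  have h : tripleProduct q (m + 1) = (X + 1) * ((∏ i ∈ range (m + 1), (1 + C (q ^ (i + 1)) * X)) *
      ∏ i ∈ range m, (X + C (q ^ (i + 1)))) := by
    rw [tripleProduct, prod_mul_distrib, prod_range_succ' (fun i => X + C (q ^ i)), pow_zero,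
      map_one]
    ring
  have h1 : ∏ i ∈ range (m + 1), (1 + q ^ (i + 1) * -1) = qPoch q (m + 1) :=
    prod_congr rfl fun i _ => by ring
  have h2 : ∏ i ∈ range m, (-1 + q ^ (i + 1)) = (-1) ^ m * qPoch q m := by
    rw [qPoch, ← card_range m, ← prod_const, card_range, ← prod_mul_distrib]
    exact prod_congr rfl fun i _ => by ring
  simp only [h, derivative_mul, derivative_add, derivative_X, derivative_one, add_zero, one_mul,
    eval_add, eval_mul, eval_X, eval_one, neg_add_cancel, zero_mul, eval_prod, eval_C, h1, h2]
  ring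

theorem eval_derivative_tripleProduct (m : ℕ) (x : A) :
    (derivative (tripleProduct q m)).eval x =
      ∑ j ∈ range (2 * m + 1), q ^ tri (j - m) * qBinom q (2 * m) j * (j * x ^ (j - 1)) := by
  have hdeg : (tripleProduct q m).natDegree < 2 * m + 1 := by
    refine Nat.lt_succ_of_le (natDegree_le_iff_coeff_eq_zero.mpr fun j hj => ?_)
    rw [coeff_tripleProduct, qBinom_eq_zero_of_lt q hj, mul_zero]
  rw [derivative_eval, sum_over_range' _ (by simp) _ hdeg]
  simp only [coeff_tripleProduct, mul_assoc]

end TripleProduct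

section Jacobi

variable {A : Type*} [CommRing A]

def jacobiCubeSum (q : A) (M : ℕ) : A := ∑ t ∈ range M, (-1) ^ t * (2 * t + 1) * q ^ tri t

theorem map_jacobiCubeSum {B F : Type*} [CommRing B] [FunLike F A B] [RingHomClass F A B] (f : F)
    (q : A) (M : ℕ) :
    f (jacobiCubeSum q M) = jacobiCubeSum (f q) M := by
  simp [jacobiCubeSum, map_ofNat]

theorem natCast_mul_neg_one_pow_sub_one (r : ℕ) :
    (r : A) * (-1) ^ (r - 1) = -(r * (-1) ^ r) := by
  cases r with
  | zero => simp
  | succ r => rw [Nat.add_sub_cancel, pow_succ]; ring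

theorem sum_range_two_mul_add_one_eq {β : Type*} [AddCommMonoid β] (g : ℕ → β) (n : ℕ) :
    ∑ j ∈ range (2 * n + 1), g j = ∑ t ∈ range n, (g (n - 1 - t) + g (n + t)) + g (2 * n) := by
  rw [sum_range_succ, two_mul, sum_range_add, ← sum_range_reflect g n, ← sum_add_distrib]

theorem sum_pow_tri_mul_neg_one_pow (q : A) (M : ℕ) :
    ∑ j ∈ range (2 * M + 1), q ^ tri (j - M) * (j * (-1) ^ (j - 1)) =
      (-1) ^ (M + 1) * jacobiCubeSum q M - 2 * M * q ^ tri M := by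
  rw [sum_range_two_mul_add_one_eq, jacobiCubeSum, mul_sum, sub_eq_add_neg (∑ _ ∈ _, _)]
  congr 1
  · refine sum_congr rfl fun t ht => ?_
    obtain ⟨r, rfl⟩ : ∃ r, M = t + 1 + r := ⟨M - t - 1, by simp at ht; omega⟩
    have hsq : ((-1 : A) ^ t) ^ 2 = 1 := by rw [← pow_mul, pow_mul', neg_one_sq, one_pow]
    rw [show t + 1 + r - 1 - t = r by omega, show t + 1 + r + t - 1 = r + 2 * t by omega,
      show ((r : ℕ) : ℤ) - (t + 1 + r : ℕ) = -t - 1 by push_cast; ring,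
      show ((t + 1 + r + t : ℕ) : ℤ) - (t + 1 + r : ℕ) = t by push_cast; ring, tri_neg_sub_one,
      natCast_mul_neg_one_pow_sub_one]
    push_cast
    linear_combination ((r : A) * (-1) ^ r * q ^ tri t) * hsq
  · rw [show ((2 * M : ℕ) : ℤ) - M = M by push_cast; ring]
    obtain _ | M := M
    · simp
    · rw [show 2 * (M + 1) - 1 = 2 * M + 1 by omega, pow_succ, pow_mul, neg_one_sq, one_pow]
      push_cast
      ring

theorem qPoch_mul_pow_tri_mul_qBinom {q : A} {N m : ℕ} (hq : q ^ (N + 1) = 0) (hm : 2 * N ≤ m)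
    (j : ℕ) : qPoch q N * (q ^ tri (j - (m + 1 : ℕ)) * qBinom q (2 * (m + 1)) j) =
      q ^ tri (j - (m + 1 : ℕ)) := by
  by_cases h : tri (j - (m + 1 : ℕ)) ≤ N
  · have h1 := le_tri (j - (m + 1 : ℕ))
    have h2 := neg_sub_one_le_tri (j - (m + 1 : ℕ))
    rw [mul_left_comm, qPoch_mul_qBinom_eq_one hq (by omega) (by omega), mul_one]
  · rw [pow_eq_zero_of_le (by omega) hq, zero_mul, mul_zero]

theorem qPoch_pow_three_eq_jacobiCubeSum {q : A} {N m : ℕ} (hq : q ^ (N + 1) = 0)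
    (hm : 2 * N ≤ m) : qPoch q N ^ 3 = jacobiCubeSum q (m + 1) := by
  have hD := eval_derivative_tripleProduct_succ q m
  rw [eval_derivative_tripleProduct] at hD
  have h := congrArg (qPoch q N * ·) hD
  simp only [mul_sum, ← mul_assoc] at h
  simp only [mul_assoc, qPoch_mul_pow_tri_mul_qBinom hq hm] at h
  have hT : N + 1 ≤ tri (m + 1 : ℕ) := by have := le_tri (m + 1 : ℕ); omega
  have hsq : ((-1 : A) ^ m) ^ 2 = 1 := by rw [← pow_mul, pow_mul', neg_one_sq, one_pow]
  rw [sum_pow_tri_mul_neg_one_pow, pow_eq_zero_of_le hT hq,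
    qPoch_eq_of_pow_eq_zero hq (by omega : N ≤ m + 1),
    qPoch_eq_of_pow_eq_zero hq (by omega : N ≤ m)] at h
  linear_combination (-(-1) ^ m) * h + (jacobiCubeSum q (m + 1) - qPoch q N ^ 3) * hsq

end Jacobi

section PowerSeries

open PowerSeries

variable {R : Type*} [CommRing R]

instance (p : ℕ) [CharP R p] : CharP R⟦X⟧ p := charP_of_injective_ringHom C_injective p

theorem mk_span_X_pow_eq_mk_iff {N : ℕ} {f g : R⟦X⟧} :
    Ideal.Quotient.mk (Ideal.span {X ^ (N + 1)}) f = Ideal.Quotient.mk _ g ↔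
      ∀ n ≤ N, coeff n f = coeff n g := by
  simp only [Ideal.Quotient.eq, Ideal.mem_span_singleton, X_pow_dvd_iff, map_sub, sub_eq_zero,
    Nat.lt_succ_iff]

theorem coeff_eq_zero_of_coeff_expand_mul_eq_zero {p r n : ℕ} (hp : p ≠ 0) {G F : R⟦X⟧}
    (hG : constantCoeff G = 1)
    (h : ∀ m ≤ n, m ≡ r [MOD p] → coeff m (expand p hp G * F) = 0) :
    ∀ m ≤ n, m ≡ r [MOD p] → coeff m F = 0 := by
  intro m
  induction m using Nat.strong_induction_on with
  | _ m ih =>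
    intro hmn hmr
    have hGF := h m hmn hmr
    rw [coeff_mul, sum_eq_single (0, m)] at hGF
    · rwa [coeff_zero_eq_constantCoeff_apply, constantCoeff_expand, hG, one_mul] at hGF
    · rintro ⟨i, l⟩ hil hne
      rw [HasAntidiagonal.mem_antidiagonal] at hil
      by_cases hpi : p ∣ i
      · have hlr : l ≡ r [MOD p] :=
          Nat.ModEq.add_right_cancel ((Nat.modEq_zero_iff_dvd).mpr hpi)
            (by rw [add_comm l, hil, add_zero]; exact hmr)
        have hi : i ≠ 0 := fun hi => hne (by simp_all)
        rw [ih l (by omega) (by omega) hlr, mul_zero]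
      · rw [coeff_expand_of_not_dvd p hp G hpi, zero_mul]
    · simp

theorem expand_qPoch_X (p : ℕ) [Fact p.Prime] [CharP R p] (n : ℕ) :
    expand p (NeZero.ne p) (qPoch X n : R⟦X⟧) = qPoch X n ^ p := by
  rw [map_qPoch, expand_X, qPoch_pow_char]

/-- `(2t+1)^2 + 2(2s+1)^2 = 8 (T_t + 2 T_s) + 3`, and `-2` is not a square mod 7. -/
theorem mul_eq_zero_of_tri_add_two_mul_tri_modEq {t s : ℕ} (h : tri t + 2 * tri s ≡ 4 [MOD 7]) :
    ((2 * t + 1) * (2 * s + 1) : ZMod 7) = 0 := by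
  have ht := congrArg (Int.cast : ℤ → ZMod 7) (two_mul_tri t)
  have hs := congrArg (Int.cast : ℤ → ZMod 7) (two_mul_tri s)
  have h4 := (ZMod.natCast_eq_natCast_iff _ _ 7).mpr h
  push_cast at ht hs h4
  have h35 : (35 : ZMod 7) = 0 := by decide
  have hsq : ((2 * t + 1) ^ 2 + 2 * (2 * s + 1) ^ 2 : ZMod 7) = 0 := by
    linear_combination -4 * ht - 8 * hs + 8 * h4 + h35
  generalize (t : ZMod 7) = x at hsq ⊢
  generalize (s : ZMod 7) = y at hsq ⊢
  revert x y
  decide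

theorem coeff_jacobiCubeSum_mul_jacobiCubeSum_X_sq (M : ℕ) {m : ℕ} (hm : m ≡ 4 [MOD 7]) :
    coeff m (jacobiCubeSum (X : (ZMod 7)⟦X⟧) M * jacobiCubeSum (X ^ 2) M) = 0 := by
  rw [jacobiCubeSum, jacobiCubeSum, sum_mul_sum, map_sum]
  refine sum_eq_zero fun t _ => ?_
  rw [map_sum]
  refine sum_eq_zero fun s _ => ?_
  have hterm : (-1 : (ZMod 7)⟦X⟧) ^ t * (2 * (t : (ZMod 7)⟦X⟧) + 1) * X ^ tri t *
      ((-1) ^ s * (2 * (s : (ZMod 7)⟦X⟧) + 1) * (X ^ 2) ^ tri s) =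
      C ((-1) ^ (t + s) * ((2 * t + 1) * (2 * s + 1)) : ZMod 7) * X ^ (tri t + 2 * tri s) := by
    simp only [map_mul, map_pow, map_neg, map_one, map_add, map_natCast, map_ofNat]
    ring
  rw [hterm, coeff_C_mul_X_pow]
  split_ifs with h
  · rw [mul_eq_zero_of_tri_add_two_mul_tri_modEq (h ▸ hm), mul_zero]
  · rfl

end PowerSeries

theorem etaTrunc_eq_qPoch (k N : ℕ) : etaTrunc k N = qPoch (PowerSeries.X ^ k) N := by
  simp only [etaTrunc, qPoch, pow_mul]

open PowerSeries in
theorem IsGF.mk_qPoch_mul_eq {R : Type*} [CommRing R] {r : ℕ} {a : ℕ → ℤ} (ha : IsGF r a)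
    (φ : ℤ →+* R) (N : ℕ) :
    Ideal.Quotient.mk (Ideal.span {X ^ (N + 1)}) (qPoch X N ^ r * map φ (mk a)) =
      Ideal.Quotient.mk _ (qPoch (X ^ 2) N ^ (r - 1)) := by
  refine mk_span_X_pow_eq_mk_iff.mpr fun n hn => ?_
  have hmap (k : ℕ) : map φ (etaTrunc k N) = qPoch (X ^ k) N := by
    rw [etaTrunc_eq_qPoch, map_qPoch, map_pow, map_X]
  rw [← hmap 2, ← map_pow, ← pow_one (X : R⟦X⟧), ← hmap 1, ← map_pow, ← map_mul, coeff_map,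
    coeff_map, ha N n hn]

open PowerSeries in
theorem IsGF.mk_expand_qPoch_mul_eq {a : ℕ → ℤ} (ha : IsGF 4 a) (N : ℕ) :
    Ideal.Quotient.mk (Ideal.span {X ^ (N + 1)})
        (expand 7 (by norm_num) (qPoch X N) * map (Int.castRingHom (ZMod 7)) (mk a)) =
      Ideal.Quotient.mk _ (jacobiCubeSum X (2 * N + 1) * jacobiCubeSum (X ^ 2) (2 * N + 1)) := by
  have : Fact (Nat.Prime 7) := ⟨by norm_num⟩
  set ψ := Ideal.Quotient.mk (Ideal.span {(X : (ZMod 7)⟦X⟧) ^ (N + 1)})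
  have hx : ψ X ^ (N + 1) = 0 := by
    rw [← map_pow, Ideal.Quotient.eq_zero_iff_mem]
    exact Ideal.subset_span rfl
  have hx2 : (ψ X ^ 2) ^ (N + 1) = 0 := by
    rw [← pow_mul, mul_comm, pow_mul, hx, zero_pow two_ne_zero]
  have hgf := ha.mk_qPoch_mul_eq (Int.castRingHom (ZMod 7)) N
  rw [map_mul, map_pow, map_qPoch, map_pow, map_qPoch, map_pow] at hgf
  rw [map_mul, map_mul, expand_qPoch_X, map_pow, map_qPoch, map_jacobiCubeSum, map_jacobiCubeSum,
    map_pow, ← qPoch_pow_three_eq_jacobiCubeSum hx le_rfl,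
    ← qPoch_pow_three_eq_jacobiCubeSum hx2 le_rfl, ← hgf]
  ring

theorem stmt_3 (a : ℕ → ℤ) (ha : IsGF 4 a) :
    ∀ n : ℕ, (7 : ℤ) ∣ a (7 * n + 4) := by
  open PowerSeries in
  intro n
  have hcoeff : ∀ m ≤ 7 * n + 4, m ≡ 4 [MOD 7] →
      coeff m (expand 7 (by norm_num) (qPoch X (7 * n + 4)) *
        map (Int.castRingHom (ZMod 7)) (mk a)) = 0 := fun m hm hm4 => by
    rw [mk_span_X_pow_eq_mk_iff.mp (ha.mk_expand_qPoch_mul_eq _) m hm]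
    exact coeff_jacobiCubeSum_mul_jacobiCubeSum_X_sq _ hm4
  have h := coeff_eq_zero_of_coeff_expand_mul_eq_zero _ (by simp [map_qPoch]) hcoeff (7 * n + 4)
    le_rfl (by simp [Nat.ModEq])
  rwa [coeff_map, coeff_mk, eq_intCast, ZMod.intCast_zmod_eq_zero_iff_dvd] at h
end

section
/- For all n ≥ 0, a_5(5n+3) ≡ 0 (mod 5), where a_5(n) is defined by ∑_{n≥0} a_5(n) q^n = (q^2;q^2)_∞^4/(q;q)_∞^5. -/
/-!
Modulo 5, `(q;q)^5 ≡ (q^5;q^5)`, so `∑ a(n) q^n ≡ (q^2;q^2)^4 / (q^5;q^5)`, and multiplying or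
dividing by a series in `q^5` does not mix the residue classes of exponents mod 5. As `2m ≡ 3`
forces `m ≡ 4 (mod 5)`, it suffices that `(q;q)^4` has no exponent `≡ 4` mod 5. By Jacobi's
identity `(q;q)^3 = ∑ (-1)^k (2k+1) q^(k(k+1)/2)`, and since `8 · k(k+1)/2 + 1 = (2k+1)^2` with
squares `≡ 0, ±1`, the series `(q;q)^3` mod 5 lives on exponents `≡ 0, 1`. Then
`(q;q)^6 ≡ (q^5;q^5) (q;q)` puts `(q;q)` on exponents `≡ 0, 1, 2`, hence `(q;q)^4` on `≡ 0, …, 3`.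

Jacobi's identity is used in truncated form, obtained by evaluating the finite triple product
`∏_{i<a} (z - q^i) ∏_{i<b} (1 - q^(i+1) z) = ∑_j (-1)^(j+a) [a+b, j]_q q^((j-a)(j-a+1)/2) z^j`
and its derivative at `z = 1` for `a = b = n`: in degrees below `n` the factor
`(q;q)_n [2n, j]_q` may be replaced by `1`, because `(q;q)_k [N, k]_q ≡ 1 mod q^(N+1-k)`.
-/

open Finset

section GaussBinom

variable {R : Type*} [CommRing R] (q : R)

def qPochhammer (n : ℕ) : R := ∏ i ∈ range n, (1 - q ^ (i + 1))

def gaussBinom : ℕ → ℕ → R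
  | _, 0 => 1
  | 0, _ + 1 => 0
  | n + 1, k + 1 => gaussBinom n k + q ^ (k + 1) * gaussBinom n (k + 1)

@[simp] lemma qPochhammer_zero : qPochhammer q 0 = 1 := prod_range_zero _

lemma qPochhammer_succ (n : ℕ) : qPochhammer q (n + 1) = qPochhammer q n * (1 - q ^ (n + 1)) :=
  prod_range_succ _ _

@[simp] lemma gaussBinom_zero_right (n : ℕ) : gaussBinom q n 0 = 1 := by
  cases n <;> rfl

lemma gaussBinom_succ_succ (n k : ℕ) :
    gaussBinom q (n + 1) (k + 1) = gaussBinom q n k + q ^ (k + 1) * gaussBinom q n (k + 1) := rfl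

lemma gaussBinom_eq_zero_of_lt {n k : ℕ} (h : n < k) : gaussBinom q n k = 0 := by
  induction n generalizing k with
  | zero => obtain ⟨k, rfl⟩ : ∃ k', k = k' + 1 := ⟨k - 1, by omega⟩; rfl
  | succ n ih =>
    obtain ⟨k, rfl⟩ : ∃ k', k = k' + 1 := ⟨k - 1, by omega⟩
    rw [gaussBinom_succ_succ, ih (by omega), ih (by omega), mul_zero, add_zero]

@[simp] lemma gaussBinom_self (n : ℕ) : gaussBinom q n n = 1 := by
  induction n with
  | zero => rfl
  | succ n ih => rw [gaussBinom_succ_succ, ih, gaussBinom_eq_zero_of_lt q (by omega), mul_zero,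
      add_zero]

lemma gaussBinom_succ_succ' {n k : ℕ} (hk : k ≤ n) :
    gaussBinom q (n + 1) (k + 1) = q ^ (n - k) * gaussBinom q n k + gaussBinom q n (k + 1) := by
  induction n generalizing k with
  | zero =>
    obtain rfl : k = 0 := by omega
    simp [gaussBinom_eq_zero_of_lt]
  | succ n ih =>
    rcases Nat.lt_or_ge n k with hnk | hkn
    · obtain rfl : k = n + 1 := by omega
      simp [gaussBinom_eq_zero_of_lt]
    cases k with
    | zero =>
      have h := ih hkn
      simp only [gaussBinom_zero_right, mul_one, Nat.sub_zero] at h ⊢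
      linear_combination gaussBinom_succ_succ q (n + 1) 0 + q * h - gaussBinom_succ_succ q n 0 +
        gaussBinom_zero_right q (n + 1) - gaussBinom_zero_right q n
    | succ k =>
      have h₁ : q ^ (k + 1 + 1) * q ^ (n - (k + 1)) = q ^ (n + 1) := by
        rw [← pow_add]; congr 1; omega
      have h₂ : q ^ (n - k) * q ^ (k + 1) = q ^ (n + 1) := by
        rw [← pow_add]; congr 1; omega
      rw [show n + 1 - (k + 1) = n - k by omega]
      linear_combination gaussBinom_succ_succ q (n + 1) (k + 1) + ih (k := k) (by omega) +
        q ^ (k + 1 + 1) * ih hkn - q ^ (n - k) * gaussBinom_succ_succ q n k -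
        gaussBinom_succ_succ q n (k + 1) + gaussBinom q n (k + 1) * (h₁ - h₂)

lemma gaussBinom_symm {n k : ℕ} (hk : k ≤ n) : gaussBinom q n (n - k) = gaussBinom q n k := by
  induction n generalizing k with
  | zero =>
    obtain rfl : k = 0 := by omega
    rfl
  | succ n ih =>
    cases k with
    | zero => simp
    | succ k =>
      rcases Nat.eq_or_lt_of_le hk with h | h
      · rw [h]; simp
      rw [show n + 1 - (k + 1) = n - (k + 1) + 1 by omega, gaussBinom_succ_succ' q (by omega),
        show n - (n - (k + 1)) = k + 1 by omega, ih (by omega),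
        show n - (k + 1) + 1 = n - k by omega, ih (by omega), gaussBinom_succ_succ]
      ring

lemma pow_dvd_qPochhammer_mul_gaussBinom_sub_one (N k : ℕ) :
    q ^ (N + 1 - k) ∣ qPochhammer q k * gaussBinom q N k - 1 := by
  induction N generalizing k with
  | zero => cases k <;> simp
  | succ N ih =>
    cases k with
    | zero => simp
    | succ k =>
      have h : qPochhammer q (k + 1) * gaussBinom q (N + 1) (k + 1) - 1 =
          (1 - q ^ (k + 1)) * (qPochhammer q k * gaussBinom q N k - 1) +
            q ^ (k + 1) * (qPochhammer q (k + 1) * gaussBinom q N (k + 1) - 1) := by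
        rw [gaussBinom_succ_succ, qPochhammer_succ]; ring
      rw [h, show N + 1 + 1 - (k + 1) = N + 1 - k by omega]
      refine dvd_add (dvd_mul_of_dvd_right (ih k) _) ?_
      exact (pow_dvd_pow q (by omega : N + 1 - k ≤ k + 1 + (N + 1 - (k + 1)))).trans
        (by rw [pow_add]; exact mul_dvd_mul_left _ (ih (k + 1)))

lemma pow_dvd_qPochhammer_sub {m n : ℕ} (h : m ≤ n) :
    q ^ (m + 1) ∣ qPochhammer q n - qPochhammer q m := by
  induction n, h using Nat.le_induction with
  | base => simp
  | succ n hmn ih =>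
    rw [qPochhammer_succ, show qPochhammer q n * (1 - q ^ (n + 1)) - qPochhammer q m =
      (qPochhammer q n - qPochhammer q m) - q ^ (n + 1) * qPochhammer q n by ring]
    exact dvd_sub ih (dvd_mul_of_dvd_left (pow_dvd_pow q (by omega)) _)

lemma pow_dvd_qPochhammer_mul_gaussBinom_two_mul_sub_one {n j : ℕ} (hj : j ≤ 2 * n) :
    q ^ min (j + 1) (2 * n + 1 - j) ∣ qPochhammer q n * gaussBinom q (2 * n) j - 1 := by
  wlog hjn : j ≤ n generalizing j
  · have h := this (j := 2 * n - j) (by omega) (by omega)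
    rwa [gaussBinom_symm q hj, show 2 * n - j + 1 = 2 * n + 1 - j by omega,
      show 2 * n + 1 - (2 * n - j) = j + 1 by omega, min_comm] at h
  rw [show qPochhammer q n * gaussBinom q (2 * n) j - 1 =
      (qPochhammer q n - qPochhammer q j) * gaussBinom q (2 * n) j +
        (qPochhammer q j * gaussBinom q (2 * n) j - 1) by ring]
  exact dvd_add (dvd_mul_of_dvd_left ((pow_dvd_pow q (min_le_left _ _)).trans
    (pow_dvd_qPochhammer_sub q hjn)) _)
    ((pow_dvd_pow q (min_le_right _ _)).trans (pow_dvd_qPochhammer_mul_gaussBinom_sub_one q _ _))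

end GaussBinom

lemma map_qPochhammer {R S F : Type*} [CommRing R] [CommRing S] [FunLike F R S]
    [RingHomClass F R S] (f : F) (q : R) (n : ℕ) : f (qPochhammer q n) = qPochhammer (f q) n := by
  simp [qPochhammer, map_prod]

def triangle (k : ℤ) : ℕ := (k * (k + 1) / 2).toNat

lemma two_mul_triangle (k : ℤ) : 2 * (triangle k : ℤ) = k * (k + 1) := by
  have hnn : 0 ≤ k * (k + 1) := by rcases le_or_gt 0 k with h | h <;> nlinarith
  rw [triangle, Int.toNat_of_nonneg (Int.ediv_nonneg hnn zero_le_two)]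
  exact Int.mul_ediv_cancel' (Int.even_mul_succ_self k).two_dvd

lemma triangle_add_one (k : ℤ) : (triangle (k + 1) : ℤ) = triangle k + k + 1 := by
  linarith [two_mul_triangle k, two_mul_triangle (k + 1)]

lemma abs_le_triangle_add_one (k : ℤ) : |k| ≤ triangle k + 1 := by
  have h := two_mul_triangle k
  rw [abs_le]
  constructor <;> nlinarith

section JacobiTripleProduct

open Polynomial

variable {R : Type*} [CommRing R] (q : R)

/-- The finite Jacobi triple product `z^a ∏_{i<a} (1 - q^i/z) ∏_{i<b} (1 - q^(i+1) z)`. -/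
noncomputable def tripleProd (a b : ℕ) : R[X] :=
  (∏ i ∈ range a, (X - C (q ^ i))) * ∏ i ∈ range b, (1 - C (q ^ (i + 1)) * X)

def tripleProdCoeff (a b j : ℕ) : R :=
  (-1) ^ (j + a) * gaussBinom q (a + b) j * q ^ triangle (j - a)

lemma tripleProdCoeff_succ_left_zero (a b : ℕ) :
    tripleProdCoeff q (a + 1) b 0 = -(tripleProdCoeff q a b 0 * q ^ a) := by
  have h := triangle_add_one (-(a + 1))
  simp only [tripleProdCoeff, gaussBinom_zero_right, Nat.cast_zero, Nat.cast_add, Nat.cast_one,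
    zero_sub, zero_add, show -((a : ℤ) + 1) + 1 = -a by ring] at h ⊢
  rw [show triangle (-(a + 1)) = triangle (-a) + a by omega]
  ring

lemma tripleProdCoeff_succ_left_succ (a b j : ℕ) :
    tripleProdCoeff q (a + 1) b (j + 1) =
      tripleProdCoeff q a b j - tripleProdCoeff q a b (j + 1) * q ^ a := by
  have h := triangle_add_one ((j : ℤ) - a)
  simp only [tripleProdCoeff, add_right_comm a 1 b, gaussBinom_succ_succ, Nat.cast_add,
    Nat.cast_one, show (j : ℤ) + 1 - (a + 1) = j - a by ring,
    show (j : ℤ) - a + 1 = j + 1 - a by ring] at h ⊢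
  have hp : q ^ triangle (j + 1 - a) * q ^ a = q ^ (j + 1) * q ^ triangle (j - a) := by
    rw [← pow_add, ← pow_add]; congr 1; omega
  linear_combination (-(-1) ^ (j + a) * gaussBinom q (a + b) (j + 1)) * hp

lemma tripleProdCoeff_succ_right_succ (a b j : ℕ) :
    tripleProdCoeff q a (b + 1) (j + 1) =
      tripleProdCoeff q a b (j + 1) - q ^ (b + 1) * tripleProdCoeff q a b j := by
  simp only [tripleProdCoeff, ← add_assoc]
  rcases le_or_gt j (a + b) with hj | hj
  · have h := triangle_add_one ((j : ℤ) - a)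
    rw [gaussBinom_succ_succ' q hj]
    push_cast at h ⊢
    rw [show (j : ℤ) - a + 1 = j + 1 - a by ring] at h
    have hp : q ^ (b + 1) * q ^ triangle (j - a) =
        q ^ (a + b - j) * q ^ triangle (j + 1 - a) := by
      rw [← pow_add, ← pow_add]; congr 1; omega
    linear_combination ((-1) ^ (j + a) * gaussBinom q (a + b) j) * hp
  · simp [gaussBinom_eq_zero_of_lt q hj, gaussBinom_eq_zero_of_lt q (Nat.lt_succ_of_lt hj),
      gaussBinom_eq_zero_of_lt q (show a + b + 1 < j + 1 by omega)]

lemma coeff_tripleProd (a b j : ℕ) : (tripleProd q a b).coeff j = tripleProdCoeff q a b j := by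
  induction a generalizing j with
  | zero =>
    induction b generalizing j with
    | zero => cases j <;> simp [tripleProd, coeff_one, tripleProdCoeff, gaussBinom, triangle]
    | succ b ih =>
      have h : tripleProd q 0 (b + 1) =
          tripleProd q 0 b - C (q ^ (b + 1)) * (tripleProd q 0 b * X) := by
        simp only [tripleProd, prod_range_succ]; ring
      rw [h]
      cases j with
      | zero => simp [ih, tripleProdCoeff]
      | succ j => rw [coeff_sub, coeff_C_mul, coeff_mul_X, ih, ih, tripleProdCoeff_succ_right_succ]
  | succ a ih =>
    have h : tripleProd q (a + 1) b = tripleProd q a b * (X - C (q ^ a)) := by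
      simp only [tripleProd, prod_range_succ]; ring
    rw [h]
    cases j with
    | zero =>
      rw [mul_coeff_zero, ih, coeff_sub, coeff_X_zero, coeff_C_zero, tripleProdCoeff_succ_left_zero]
      ring
    | succ j => rw [coeff_mul_X_sub_C, ih, ih, tripleProdCoeff_succ_left_succ]

lemma natDegree_tripleProd_lt (a b : ℕ) : (tripleProd q a b).natDegree < a + b + 1 := by
  refine Nat.lt_succ_of_le (natDegree_le_iff_coeff_eq_zero.2 fun j hj => ?_)
  rw [coeff_tripleProd, tripleProdCoeff, gaussBinom_eq_zero_of_lt q hj, mul_zero, zero_mul]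

lemma tripleProd_succ_left (a b : ℕ) :
    tripleProd q (a + 1) b = (X - 1) *
      ((∏ i ∈ range a, (X - C (q ^ (i + 1)))) * ∏ i ∈ range b, (1 - C (q ^ (i + 1)) * X)) := by
  rw [tripleProd, prod_range_succ', pow_zero, map_one]
  ring

lemma sum_tripleProdCoeff (a b : ℕ) :
    ∑ j ∈ range (a + b + 1), tripleProdCoeff q a b j = (tripleProd q a b).eval 1 := by
  simp [eval_eq_sum_range' (natDegree_tripleProd_lt q a b), coeff_tripleProd]

lemma sum_mul_tripleProdCoeff (a b : ℕ) :
    ∑ j ∈ range (a + b + 1), (j : R) * tripleProdCoeff q a b j =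
      (derivative (tripleProd q a b)).eval 1 := by
  rw [derivative_eval, sum_over_range' _ (by simp) _ (natDegree_tripleProd_lt q a b)]
  simp [coeff_tripleProd, mul_comm]

lemma sum_tripleProdCoeff_succ_left (a b : ℕ) :
    ∑ j ∈ range (a + b + 2), tripleProdCoeff q (a + 1) b j = 0 := by
  rw [show a + b + 2 = a + 1 + b + 1 by ring, sum_tripleProdCoeff, tripleProd_succ_left]
  simp

lemma sum_mul_tripleProdCoeff_succ_left (a b : ℕ) :
    ∑ j ∈ range (a + b + 2), (j : R) * tripleProdCoeff q (a + 1) b j =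
      qPochhammer q a * qPochhammer q b := by
  rw [show a + b + 2 = a + 1 + b + 1 by ring, sum_mul_tripleProdCoeff, tripleProd_succ_left]
  simp [derivative_mul, qPochhammer, eval_prod]

/-- Value and derivative at `z = 1` of the finite triple product; as `a, b → ∞` this becomes
Jacobi's identity `(q;q)_∞^3 = ∑ (-1)^k (2k+1) q^(k(k+1)/2)`. -/
lemma two_mul_qPochhammer_mul_qPochhammer (a b : ℕ) :
    2 * (qPochhammer q a * qPochhammer q b) =
      ∑ j ∈ range (a + b + 2),
        ((2 * ((j : ℤ) - (a + 1 : ℕ)) + 1 : ℤ) : R) * tripleProdCoeff q (a + 1) b j := by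
  have h₀ := sum_tripleProdCoeff_succ_left q a b
  have h₁ := sum_mul_tripleProdCoeff_succ_left q a b
  simp only [Int.cast_add, Int.cast_mul, Int.cast_sub, Int.cast_natCast, Int.cast_ofNat,
    Int.cast_one, add_mul, sub_mul, mul_assoc, sum_add_distrib, sum_sub_distrib, ← mul_sum,
    one_mul, h₀, h₁]
  simp

end JacobiTripleProduct

section JacobiIdentity

open PowerSeries

variable {R : Type*} [CommRing R]

lemma coeff_mul_X_pow_eq_ite {f : R⟦X⟧} {e t d : ℕ} (h : X ^ e ∣ f - 1) (hd : d < t + e) :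
    coeff d (f * X ^ t) = if t = d then 1 else 0 := by
  have hf := X_pow_dvd_iff.1 h (d - t)
  rw [map_sub, coeff_one, sub_eq_zero] at hf
  rw [coeff_mul_X_pow']
  split_ifs with htd htd' htd'
  · rw [hf (by omega), if_pos (by omega)]
  · rw [hf (by omega), if_neg (by omega)]
  · omega
  · rfl

lemma coeff_qPochhammer_X_mul_tripleProdCoeff {n d j : ℕ} (hd : d < n) (hj : j ≤ 2 * n) :
    coeff d (qPochhammer (X : R⟦X⟧) n * tripleProdCoeff X n n j) =
      if triangle (j - n) = d then (-1) ^ (j + n) else 0 := by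
  have hT := abs_le.1 (abs_le_triangle_add_one ((j : ℤ) - n))
  rw [tripleProdCoeff, ← two_mul, show qPochhammer (X : R⟦X⟧) n *
      ((-1) ^ (j + n) * gaussBinom X (2 * n) j * X ^ triangle (j - n)) =
      C ((-1) ^ (j + n)) * (qPochhammer X n * gaussBinom X (2 * n) j * X ^ triangle (j - n)) by
    simp only [map_pow, map_neg, map_one]; ring, coeff_C_mul,
    coeff_mul_X_pow_eq_ite (pow_dvd_qPochhammer_mul_gaussBinom_two_mul_sub_one X hj) (by omega)]
  split_ifs <;> simp

lemma two_mul_coeff_qPochhammer_X_pow_three {n d : ℕ} (hd : d < n) :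
    2 * coeff d (qPochhammer (X : R⟦X⟧) n ^ 3) =
      ∑ j ∈ range (2 * n + 1),
        if triangle (j - n) = d then (-1) ^ (j + n) * ((2 * ((j : ℤ) - n) + 1 : ℤ) : R)
        else 0 := by
  obtain ⟨m, rfl⟩ : ∃ m, n = m + 1 := ⟨n - 1, by omega⟩
  set P := qPochhammer (X : R⟦X⟧)
  have hcube : 2 * P (m + 1) ^ 3 = P (m + 1) * (2 * (P m * P (m + 1))) * (1 - X ^ (m + 1)) := by
    linear_combination (2 * P (m + 1) ^ 2) * qPochhammer_succ (X : R⟦X⟧) m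
  rw [two_mul, ← map_add, ← two_mul, hcube, mul_sub, mul_one, map_sub,
    coeff_mul_X_pow', if_neg (by omega), sub_zero, two_mul_qPochhammer_mul_qPochhammer,
    show m + (m + 1) + 2 = 2 * (m + 1) + 1 by ring, mul_sum, map_sum]
  refine sum_congr rfl fun j hj => ?_
  rw [mul_left_comm, ← map_intCast (C (R := R)), coeff_C_mul,
    coeff_qPochhammer_X_mul_tripleProdCoeff hd (by rw [mem_range] at hj; omega)]
  split_ifs <;> simp [mul_comm]

end JacobiIdentity

section ResidueSupport

open PowerSeries Pointwise

variable {R : Type*} [CommRing R] {p N : ℕ} {A B : Finset (ZMod p)}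

def SupportedOnResidues (p N : ℕ) (A : Finset (ZMod p)) (f : R⟦X⟧) : Prop :=
  ∀ i < N, (i : ZMod p) ∉ A → coeff i f = 0

namespace SupportedOnResidues

lemma mono {f : R⟦X⟧} (hf : SupportedOnResidues p N A f) (h : A ⊆ B) :
    SupportedOnResidues p N B f :=
  fun i hi hB => hf i hi fun hA => hB (h hA)

lemma mul {f g : R⟦X⟧} (hf : SupportedOnResidues p N A f) (hg : SupportedOnResidues p N B g) :
    SupportedOnResidues p N (A + B) (f * g) := by
  intro i hi hAB
  rw [coeff_mul]
  refine sum_eq_zero fun x hx => ?_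
  rw [HasAntidiagonal.mem_antidiagonal] at hx
  by_cases hA : (x.1 : ZMod p) ∈ A
  · refine mul_eq_zero_of_right _ (hg x.2 (by omega) fun hB => hAB ?_)
    rw [← hx, Nat.cast_add]
    exact add_mem_add hA hB
  · exact mul_eq_zero_of_left (hf x.1 (by omega) hA) _

lemma expand (hp : p ≠ 0) (φ : R⟦X⟧) : SupportedOnResidues p N {0} (expand p hp φ) :=
  fun _ _ hi => coeff_expand_of_not_dvd p hp φ fun hdvd =>
    hi (Finset.mem_singleton.2 ((ZMod.natCast_eq_zero_iff _ _).2 hdvd))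

lemma of_expand_mul (hp : p ≠ 0) {φ f : R⟦X⟧} (hφ : IsUnit φ)
    (h : SupportedOnResidues p N A (PowerSeries.expand p hp φ * f)) :
    SupportedOnResidues p N A f := by
  obtain ⟨ψ, hψ⟩ := hφ.exists_left_inv
  have hf : f = PowerSeries.expand p hp ψ * (PowerSeries.expand p hp φ * f) := by
    rw [← mul_assoc, ← map_mul, hψ, map_one, one_mul]
  rw [hf]
  simpa [Finset.singleton_zero] using (expand hp ψ).mul h

end SupportedOnResidues

end ResidueSupport

section ModFive

open PowerSeries Pointwise

instance : Fact (Nat.Prime 5) := ⟨Nat.prime_five⟩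

lemma PowerSeries.expand_zmod_eq_pow (p : ℕ) [Fact p.Prime] (f : (ZMod p)⟦X⟧) :
    expand p (NeZero.ne p) f = f ^ p := by
  have h := MvPowerSeries.map_frobenius_expand (σ := Unit) p (NeZero.ne p) (f := f)
  rwa [ZMod.frobenius_zmod, MvPowerSeries.map_id] at h

lemma isUnit_qPochhammer_X {R : Type*} [CommRing R] (n : ℕ) :
    IsUnit (qPochhammer (X : R⟦X⟧) n) := by
  simp [isUnit_iff_constantCoeff, qPochhammer]

lemma two_mul_add_one_eq_zero_of_triangle_eq {k : ℤ} {d : ℕ} (h : triangle k = d)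
    (hd : (d : ZMod 5) ∉ ({0, 1} : Finset (ZMod 5))) : ((2 * k + 1 : ℤ) : ZMod 5) = 0 := by
  have hsq : (2 * k + 1) ^ 2 = 8 * (d : ℤ) + 1 := by
    have h₂ := two_mul_triangle k
    rw [h] at h₂
    linear_combination (-4) * h₂
  have hsq' := congrArg (Int.cast : ℤ → ZMod 5) hsq
  push_cast at hsq' hd ⊢
  revert hsq' hd
  generalize (2 * k + 1 : ZMod 5) = x
  generalize (d : ZMod 5) = y
  decide +revert

lemma supportedOnResidues_qPochhammer_X_pow_three (N : ℕ) :
    SupportedOnResidues 5 N {0, 1} (qPochhammer (X : (ZMod 5)⟦X⟧) N ^ 3) := by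
  intro d hd hres
  have h := two_mul_coeff_qPochhammer_X_pow_three (R := ZMod 5) hd
  rw [sum_eq_zero fun j _ => ?_] at h
  · exact (mul_eq_zero.1 h).resolve_left (by decide)
  split_ifs with hT
  · rw [two_mul_add_one_eq_zero_of_triangle_eq hT hres, mul_zero]
  · rfl

/-- Since `(q;q)^6 ≡ (q^5;q^5) (q;q) (mod 5)`, the support of `(q;q)^3` forces that of `(q;q)`. -/
lemma supportedOnResidues_qPochhammer_X (N : ℕ) :
    SupportedOnResidues 5 N {0, 1, 2} (qPochhammer (X : (ZMod 5)⟦X⟧) N) := by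
  have h := (supportedOnResidues_qPochhammer_X_pow_three N).mul
    (supportedOnResidues_qPochhammer_X_pow_three N)
  rw [← pow_add, pow_succ, ← expand_zmod_eq_pow] at h
  exact (h.of_expand_mul _ (isUnit_qPochhammer_X N)).mono (by decide)

lemma supportedOnResidues_qPochhammer_X_pow_four (N : ℕ) :
    SupportedOnResidues 5 N {0, 1, 2, 3} (qPochhammer (X : (ZMod 5)⟦X⟧) N ^ 4) := by
  rw [pow_succ]
  exact ((supportedOnResidues_qPochhammer_X_pow_three N).mul
    (supportedOnResidues_qPochhammer_X N)).mono (by decide)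

lemma supportedOnResidues_qPochhammer_X_sq_pow_four (N : ℕ) :
    SupportedOnResidues 5 (2 * N) {0, 1, 2, 4} (qPochhammer (X ^ 2 : (ZMod 5)⟦X⟧) N ^ 4) := by
  intro i hi hres
  rw [← expand_X 2 two_ne_zero, ← map_qPochhammer, ← map_pow, coeff_expand]
  split_ifs with h2
  · obtain ⟨m, rfl⟩ := h2
    rw [Nat.mul_div_cancel_left m two_pos]
    refine supportedOnResidues_qPochhammer_X_pow_four N m (by omega) ?_
    push_cast at hres ⊢
    revert hres
    generalize (m : ZMod 5) = x
    decide +revert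
  · rfl

end ModFive

open PowerSeries

lemma etaTrunc_eq_qPochhammer (k N : ℕ) : etaTrunc k N = qPochhammer (X ^ k) N := by
  simp [etaTrunc, qPochhammer, pow_mul]

theorem stmt_6 (a : ℕ → ℤ) (ha : IsGF 5 a) :
    ∀ n : ℕ, (5 : ℤ) ∣ a (5 * n + 3) := by
  intro n
  set N := 5 * n + 3
  let red := PowerSeries.map (Int.castRingHom (ZMod 5))
  have hred (k : ℕ) : red (etaTrunc k N) = qPochhammer (X ^ k) N := by
    rw [etaTrunc_eq_qPochhammer, map_qPochhammer, map_pow, map_X]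
  have hA : SupportedOnResidues 5 (N + 1) {0, 1, 2, 4}
      (expand 5 (NeZero.ne 5) (qPochhammer X N) * red (mk a)) := by
    intro i hi hres
    have h := congrArg (Int.castRingHom (ZMod 5)) (ha N i (by omega))
    rw [← coeff_map, ← coeff_map, map_mul, map_pow, map_pow, hred, hred, pow_one,
      ← expand_zmod_eq_pow] at h
    rw [h]
    exact supportedOnResidues_qPochhammer_X_sq_pow_four N i (by omega) hres
  have hN : (N : ZMod 5) = 3 := by simp [N, show (5 : ZMod 5) = 0 from rfl]
  have h := hA.of_expand_mul _ (isUnit_qPochhammer_X N) N (by omega) (by rw [hN]; decide)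
  rwa [coeff_map, coeff_mk, eq_intCast, ZMod.intCast_zmod_eq_zero_iff_dvd] at h
end
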